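/- Let (X,μ,T) be an ergodic topological dynamical system. If (X,T) is μ-mean sensitive with sensitivity constant ε, then for μ-almost every x, μ(B^b_{ε/3}(x)) = 0, where B^b_r(x) is the r-ball in the Besicovitch pseudometric. -/

import Mathlib

open Filter Metric Set
open scoped Classical

noncomputable def lowerDensity (S : Set ℕ) : ℝ :=
  Filter.atTop.liminf (fun n => (((Finset.range (n + 1)).filter (fun i => i ∈ S)).card : ℝ) / (n + 1))

noncomputable def upperDensity (S : Set ℕ) : ℝ :=
  Filter.atTop.limsup (fun n => (((Finset.range (n + 1)).filter (fun i => i ∈ S)).card : ℝ) / (n + 1))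

noncomputable def besicovitch {X : Type*} [MetricSpace X] (T : X → X) (x y : X) : ℝ :=
  sInf {δ : ℝ | 0 < δ ∧ upperDensity {i : ℕ | δ < dist (T^[i] x) (T^[i] y)} < δ}

open MeasureTheory

/-!
The Besicovitch distance `d_b` is a nonnegative pseudometric, so around every point (not just
almost every one) no two points of the closed `d_b`-ball of radius `ε/3` are more than `ε` apart.
Balls of `d_b` are Borel (upper densities of Borel families of sets of times are measurable, and
`d_b` is determined by rational radii), so a ball of positive measure would contradict mean
sensitivity.
-/

section UpperDensity

/-- `upperDensity S` is definitionally `atTop.limsup (partialDensity S)`. -/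
noncomputable def partialDensity (S : Set ℕ) (n : ℕ) : ℝ :=
  (((Finset.range (n + 1)).filter (fun i => i ∈ S)).card : ℝ) / (n + 1)

lemma partialDensity_nonneg (S : Set ℕ) (n : ℕ) : 0 ≤ partialDensity S n := by
  unfold partialDensity; positivity

lemma partialDensity_le_one (S : Set ℕ) (n : ℕ) : partialDensity S n ≤ 1 := by
  unfold partialDensity
  rw [div_le_one (by positivity)]
  exact_mod_cast (Finset.card_filter_le _ _).trans (Finset.card_range (n + 1)).le

lemma partialDensity_mono {S S' : Set ℕ} (h : S ⊆ S') (n : ℕ) :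
    partialDensity S n ≤ partialDensity S' n := by
  unfold partialDensity
  gcongr

lemma partialDensity_union_le (S S' : Set ℕ) (n : ℕ) :
    partialDensity (S ∪ S') n ≤ partialDensity S n + partialDensity S' n := by
  unfold partialDensity
  rw [← add_div]
  gcongr
  simp only [Set.mem_union, Finset.filter_or]
  exact_mod_cast Finset.card_union_le _ _

lemma isBoundedUnder_le_partialDensity (S : Set ℕ) :
    IsBoundedUnder (· ≤ ·) atTop (partialDensity S) :=
  isBoundedUnder_of ⟨1, partialDensity_le_one S⟩

lemma isBoundedUnder_ge_partialDensity (S : Set ℕ) :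
    IsBoundedUnder (· ≥ ·) atTop (partialDensity S) :=
  isBoundedUnder_of ⟨0, partialDensity_nonneg S⟩

lemma upperDensity_le_one (S : Set ℕ) : upperDensity S ≤ 1 :=
  limsup_le_of_le (isBoundedUnder_ge_partialDensity S).isCoboundedUnder_le
    (Eventually.of_forall (partialDensity_le_one S))

lemma upperDensity_mono {S S' : Set ℕ} (h : S ⊆ S') : upperDensity S ≤ upperDensity S' :=
  limsup_le_limsup (Eventually.of_forall (partialDensity_mono h))
    (isBoundedUnder_ge_partialDensity S).isCoboundedUnder_le
    (isBoundedUnder_le_partialDensity S')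

lemma upperDensity_union_le (S S' : Set ℕ) :
    upperDensity (S ∪ S') ≤ upperDensity S + upperDensity S' :=
  calc atTop.limsup (partialDensity (S ∪ S'))
      ≤ atTop.limsup (partialDensity S + partialDensity S') :=
        limsup_le_limsup (Eventually.of_forall (partialDensity_union_le S S'))
          (isBoundedUnder_ge_partialDensity _).isCoboundedUnder_le
          (isBoundedUnder_le_add (isBoundedUnder_le_partialDensity S)
            (isBoundedUnder_le_partialDensity S'))
    _ ≤ upperDensity S + upperDensity S' :=
        limsup_add_le (isBoundedUnder_ge_partialDensity S) (isBoundedUnder_le_partialDensity S)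
          (isBoundedUnder_ge_partialDensity S').isCoboundedUnder_le
          (isBoundedUnder_le_partialDensity S')

lemma measurable_upperDensity {α : Type*} [MeasurableSpace α] {A : ℕ → Set α}
    (hA : ∀ i, MeasurableSet (A i)) : Measurable fun a => upperDensity {i | a ∈ A i} := by
  refine Measurable.limsup fun n => ?_
  simp only [Set.mem_ofPred_eq, Finset.card_filter, Nat.cast_sum, Nat.cast_ite, Nat.cast_one,
    Nat.cast_zero]
  exact (Finset.measurable_sum _ fun i _ =>
    Measurable.ite (hA i) measurable_const measurable_const).div_const _

end UpperDensity

section Besicovitch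

variable {X : Type*} [MetricSpace X] (T : X → X)

/-- `besicovitch T x y` is definitionally `sInf (besicovitchRadii T x y)`. -/
def besicovitchRadii (x y : X) : Set ℝ :=
  {δ : ℝ | 0 < δ ∧ upperDensity {i : ℕ | δ < dist (T^[i] x) (T^[i] y)} < δ}

lemma besicovitchRadii_nonempty (x y : X) : (besicovitchRadii T x y).Nonempty :=
  ⟨2, two_pos, (upperDensity_le_one _).trans_lt one_lt_two⟩

lemma besicovitchRadii_bddBelow (x y : X) : BddBelow (besicovitchRadii T x y) :=
  ⟨0, fun _ hδ => hδ.1.le⟩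

lemma isUpperSet_besicovitchRadii (x y : X) : IsUpperSet (besicovitchRadii T x y) :=
  fun _ _ hδδ' hδ => ⟨hδ.1.trans_le hδδ',
    ((upperDensity_mono fun _ hi => hδδ'.trans_lt hi).trans_lt hδ.2).trans_le hδδ'⟩

lemma besicovitch_le_of_mem {x y : X} {δ : ℝ} (h : δ ∈ besicovitchRadii T x y) :
    besicovitch T x y ≤ δ :=
  csInf_le (besicovitchRadii_bddBelow T x y) h

lemma mem_besicovitchRadii_of_lt {x y : X} {δ : ℝ} (h : besicovitch T x y < δ) :
    δ ∈ besicovitchRadii T x y := by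
  obtain ⟨δ₀, hδ₀, hlt⟩ := exists_lt_of_csInf_lt (besicovitchRadii_nonempty T x y) h
  exact isUpperSet_besicovitchRadii T x y hlt.le hδ₀

lemma besicovitch_nonneg (x y : X) : 0 ≤ besicovitch T x y :=
  le_csInf (besicovitchRadii_nonempty T x y) fun _ hδ => hδ.1.le

lemma besicovitch_comm (x y : X) : besicovitch T x y = besicovitch T y x := by
  simp only [besicovitch, dist_comm]

lemma add_mem_besicovitchRadii {x y z : X} {δ₁ δ₂ : ℝ} (h₁ : δ₁ ∈ besicovitchRadii T x y)
    (h₂ : δ₂ ∈ besicovitchRadii T y z) : δ₁ + δ₂ ∈ besicovitchRadii T x z := by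
  have hsub : {i : ℕ | δ₁ + δ₂ < dist (T^[i] x) (T^[i] z)} ⊆
      {i : ℕ | δ₁ < dist (T^[i] x) (T^[i] y)} ∪ {i : ℕ | δ₂ < dist (T^[i] y) (T^[i] z)} := by
    intro i hi
    by_contra hc
    simp only [Set.mem_union, Set.mem_ofPred_eq, not_or, not_lt] at hi hc
    linarith [dist_triangle (T^[i] x) (T^[i] y) (T^[i] z)]
  refine ⟨add_pos h₁.1 h₂.1, ?_⟩
  calc upperDensity {i : ℕ | δ₁ + δ₂ < dist (T^[i] x) (T^[i] z)}
      ≤ upperDensity {i : ℕ | δ₁ < dist (T^[i] x) (T^[i] y)} +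
          upperDensity {i : ℕ | δ₂ < dist (T^[i] y) (T^[i] z)} :=
        (upperDensity_mono hsub).trans (upperDensity_union_le _ _)
    _ < δ₁ + δ₂ := add_lt_add h₁.2 h₂.2

lemma besicovitch_triangle (x y z : X) :
    besicovitch T x z ≤ besicovitch T x y + besicovitch T y z := by
  refine le_of_forall_pos_le_add fun η hη => ?_
  have h₁ := mem_besicovitchRadii_of_lt T (lt_add_of_pos_right (besicovitch T x y) (half_pos hη))
  have h₂ := mem_besicovitchRadii_of_lt T (lt_add_of_pos_right (besicovitch T y z) (half_pos hη))
  linarith [besicovitch_le_of_mem T (add_mem_besicovitchRadii T h₁ h₂)]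

lemma besicovitch_lt_iff {x y : X} {r : ℝ} :
    besicovitch T x y < r ↔ ∃ q : ℚ, (q : ℝ) < r ∧ (q : ℝ) ∈ besicovitchRadii T x y := by
  constructor
  · intro h
    obtain ⟨q, hq, hqr⟩ := exists_rat_btwn h
    exact ⟨q, hqr, mem_besicovitchRadii_of_lt T hq⟩
  · rintro ⟨q, hqr, hq⟩
    exact (besicovitch_le_of_mem T hq).trans_lt hqr

variable [MeasurableSpace X] [OpensMeasurableSpace X]

lemma measurable_besicovitch {T : X → X} (hT : Measurable T) (x : X) :
    Measurable (besicovitch T x) := by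
  have hradii (δ : ℝ) : MeasurableSet {y | δ ∈ besicovitchRadii T x y} :=
    (MeasurableSet.const _).inter <| measurableSet_lt (measurable_upperDensity fun i =>
      measurableSet_lt measurable_const
        ((continuous_const.dist continuous_id).measurable.comp (hT.iterate i))) measurable_const
  refine measurable_of_Iio fun r => ?_
  have hIio : besicovitch T x ⁻¹' Iio r =
      ⋃ (q : ℚ) (_ : (q : ℝ) < r), {y | (q : ℝ) ∈ besicovitchRadii T x y} := by
    ext y
    simp [besicovitch_lt_iff]
  rw [hIio]
  exact MeasurableSet.iUnion fun q => MeasurableSet.iUnion fun _ => hradii q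

end Besicovitch

theorem meanSensitive_ball_null_general {X : Type*} [MetricSpace X]
    [MeasurableSpace X] [BorelSpace X]
    (T : X → X) (hT : Continuous T) (μ : Measure X) (ε : ℝ)
    (hsen : ∀ A : Set X, MeasurableSet A → 0 < μ A →
      ∃ x ∈ A, ∃ y ∈ A, ε < besicovitch T x y) :
    ∀ᵐ x ∂μ, μ {y : X | besicovitch T x y ≤ ε / 3} = 0 := by
  refine ae_of_all μ fun x => ?_
  by_contra hpos
  obtain ⟨y, hy, z, hz, hyz⟩ := hsen _
    (measurableSet_le (measurable_besicovitch hT.measurable x) measurable_const)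
    (pos_iff_ne_zero.2 hpos)
  have hyxz := besicovitch_triangle T y x z
  rw [besicovitch_comm T y x] at hyxz
  linarith [besicovitch_nonneg T y z, hy.out, hz.out]

theorem meanSensitive_ball_null {X : Type*} [MetricSpace X] [CompactSpace X]
    [MeasurableSpace X] [BorelSpace X]
    (T : X → X) (hT : Continuous T) (μ : Measure X) [IsProbabilityMeasure μ]
    (hErg : Ergodic T μ) (ε : ℝ) (hε : 0 < ε)
    (hsen : ∀ A : Set X, MeasurableSet A → 0 < μ A →
      ∃ x ∈ A, ∃ y ∈ A, ε < besicovitch T x y) :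
    ∀ᵐ x ∂μ, μ {y : X | besicovitch T x y ≤ ε / 3} = 0 :=
  meanSensitive_ball_null_general T hT μ ε hsen
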